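/- (Matrix computation for perturbed product potentials.) Suppose V(x) = Σ_{i=1}^d U_i(x_i) + φ(x) with U_i : ℝ → ℝ and φ : ℝ^d → ℝ smooth. Fix ε_1,…,ε_d ∈ ℝ and let h_i : ℝ → ℝ be smooth with h_i' = e^{ε_i U_i}; set H(x) = (h_1(x_1),…,h_d(x_d)). Then for every x ∈ ℝ^d, − J_{𝕃H}(x)^T (J_H(x)^T)^{-1} = ∇²φ(x) + D(x), where D(x) is the diagonal matrix with entries D_{ii}(x) = (1 − ε_i)(U_i''(x_i) + ε_i U_i'(x_i)²) + ε_i (∂_i φ(x)) U_i'(x_i). -/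

import Mathlib

/-!
The field `H` acts coordinatewise, so `J_H = diag(e^{ε_i U_i(x_i)})` and
`L H_i = h_i'' - (∂_i V) h_i' = e^{ε_i U_i} ((ε_i - 1) U_i' - ∂_i φ)`. Differentiating this once
more gives `J_{𝕃H}ᵀ = -(∇²φ + D) diag(e^{ε_i U_i})`, and the diagonal factor cancels against `(J_Hᵀ)⁻¹`.
-/

open Real MeasureTheory Matrix

noncomputable section

abbrev Euc (d : ℕ) := Fin d → ℝ

/-- partial derivative in direction `i`. -/
def pd {d : ℕ} (i : Fin d) (f : Euc d → ℝ) (x : Euc d) : ℝ :=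
  fderiv ℝ f x (Pi.single i 1)

/-- Euclidean gradient. -/
def gradv {d : ℕ} (f : Euc d → ℝ) (x : Euc d) : Euc d := fun i => pd i f x

/-- The diffusion operator `L f = Δ f - ∇V ⋅ ∇f`. -/
def Lop {d : ℕ} (V f : Euc d → ℝ) (x : Euc d) : ℝ :=
  (∑ i, pd i (pd i f) x) - gradv V x ⬝ᵥ gradv f x

/-- Hessian matrix. -/
def hessM {d : ℕ} (V : Euc d → ℝ) (x : Euc d) : Matrix (Fin d) (Fin d) ℝ :=
  Matrix.of fun i j => pd i (pd j V) x

/-- Componentwise application of `L` to a vector field. -/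
def vecL {d : ℕ} (V : Euc d → ℝ) (F : Euc d → Euc d) (x : Euc d) : Euc d :=
  fun i => Lop V (fun y => F y i) x

/-- Entrywise application of `L` to a matrix field. -/
def matL {d : ℕ} (V : Euc d → ℝ) (M : Euc d → Matrix (Fin d) (Fin d) ℝ) (x : Euc d) :
    Matrix (Fin d) (Fin d) ℝ :=
  Matrix.of fun i j => Lop V (fun y => M y i j) x

/-- Jacobian matrix of a vector field: `(jac H x) i j = ∂_j H_i (x)`. -/
def jac {d : ℕ} (H : Euc d → Euc d) (x : Euc d) : Matrix (Fin d) (Fin d) ℝ :=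
  Matrix.of fun i j => pd j (fun y => H y i) x

/-- `(∇A⁻¹ ∇F)_i = ∑_{j,k} ∂_k (A⁻¹)_{i,j} ∂_k F_j`. -/
def gAinvG {d : ℕ} (A : Euc d → Matrix (Fin d) (Fin d) ℝ) (F : Euc d → Euc d) (x : Euc d) :
    Euc d :=
  fun i => ∑ j, ∑ k, pd k (fun y => (A y)⁻¹ i j) x * pd k (fun y => F y j) x

/-- The operator `𝕃_A F = 𝕃 F + 2 A ∇A⁻¹ ∇F`. -/
def LA {d : ℕ} (V : Euc d → ℝ) (A : Euc d → Matrix (Fin d) (Fin d) ℝ) (F : Euc d → Euc d)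
    (x : Euc d) : Euc d :=
  vecL V F x + (2 : ℝ) • (A x *ᵥ gAinvG A F x)

/-- The matrix field `M_A = A (∇²V) A⁻¹ - A (𝕃 A⁻¹)`. -/
def MA {d : ℕ} (V : Euc d → ℝ) (A : Euc d → Matrix (Fin d) (Fin d) ℝ) (x : Euc d) :
    Matrix (Fin d) (Fin d) ℝ :=
  A x * hessM V x * (A x)⁻¹ - A x * matL V (fun y => (A y)⁻¹) x

/-- The Schrödinger-type operator `𝕃_A^{M_A} F = 𝕃_A F - M_A F`. -/
def LAM {d : ℕ} (V : Euc d → ℝ) (A : Euc d → Matrix (Fin d) (Fin d) ℝ) (F : Euc d → Euc d)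
    (x : Euc d) : Euc d :=
  LA V A F x - MA V A x *ᵥ F x

/-- The matrix field `S = (A Aᵀ)⁻¹`. -/
def Smat {d : ℕ} (A : Euc d → Matrix (Fin d) (Fin d) ℝ) (x : Euc d) :
    Matrix (Fin d) (Fin d) ℝ :=
  (A x * (A x)ᵀ)⁻¹

/-- The probability measure with density proportional to `e^{-V}`. -/
def gibbs {d : ℕ} (V : Euc d → ℝ) : Measure (Euc d) :=
  (ENNReal.ofReal (∫ x, Real.exp (-V x)))⁻¹ •
    MeasureTheory.volume.withDensity fun x => ENNReal.ofReal (Real.exp (-V x))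

/-- Variance with respect to a measure. -/
def Var' {d : ℕ} (μ : Measure (Euc d)) (f : Euc d → ℝ) : ℝ :=
  (∫ x, f x ^ 2 ∂μ) - (∫ x, f x ∂μ) ^ 2

section PartialDerivatives

variable {d : ℕ} {x : Euc d}

theorem pd_const (i : Fin d) (c : ℝ) : pd i (fun _ => c) x = 0 := by
  simp [pd]

theorem pd_add {f g : Euc d → ℝ} (hf : DifferentiableAt ℝ f x) (hg : DifferentiableAt ℝ g x)
    (i : Fin d) : pd i (fun y => f y + g y) x = pd i f x + pd i g x := by
  simp [pd, fderiv_fun_add hf hg]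

theorem pd_sub {f g : Euc d → ℝ} (hf : DifferentiableAt ℝ f x) (hg : DifferentiableAt ℝ g x)
    (i : Fin d) : pd i (fun y => f y - g y) x = pd i f x - pd i g x := by
  simp [pd, fderiv_fun_sub hf hg]

theorem pd_mul {f g : Euc d → ℝ} (hf : DifferentiableAt ℝ f x) (hg : DifferentiableAt ℝ g x)
    (i : Fin d) : pd i (fun y => f y * g y) x = f x * pd i g x + g x * pd i f x := by
  simp [pd, fderiv_fun_mul hf hg]

theorem pd_const_mul {f : Euc d → ℝ} (hf : DifferentiableAt ℝ f x) (c : ℝ) (i : Fin d) :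
    pd i (fun y => c * f y) x = c * pd i f x := by
  simp [pd, fderiv_const_mul hf]

theorem pd_sum {ι : Type*} (s : Finset ι) {f : ι → Euc d → ℝ}
    (hf : ∀ j ∈ s, DifferentiableAt ℝ (f j) x) (i : Fin d) :
    pd i (fun y => ∑ j ∈ s, f j y) x = ∑ j ∈ s, pd i (f j) x := by
  simp [pd, fderiv_fun_sum hf]

theorem pd_comp_apply {f : ℝ → ℝ} {i : Fin d} (hf : DifferentiableAt ℝ f (x i)) (j : Fin d) :
    pd j (fun y => f (y i)) x = if i = j then deriv f (x i) else 0 := by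
  have hcomp : HasFDerivAt (fun y : Euc d => f (y i)) (deriv f (x i) • .proj i) x :=
    hf.hasDerivAt.comp_hasFDerivAt x (ContinuousLinearMap.proj i : Euc d →L[ℝ] ℝ).hasFDerivAt
  rw [pd, hcomp.fderiv]
  simp [Pi.single_apply]

theorem pd_sum_comp_apply {U : Fin d → ℝ → ℝ} (hU : ∀ j, DifferentiableAt ℝ (U j) (x j))
    (i : Fin d) : pd i (fun y => ∑ j, U j (y j)) x = deriv (U i) (x i) := by
  rw [pd_sum (f := fun j y => U j (y j)) _ fun j _ => (hU j).comp x (differentiableAt_apply j x)]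
  simp [pd_comp_apply (hU _)]

theorem ContDiff.differentiable_pd {f : Euc d → ℝ} (hf : ContDiff ℝ 2 f) (i : Fin d) :
    Differentiable ℝ (pd i f) :=
  ((hf.fderiv_right (m := 1) (by norm_num)).clm_apply contDiff_const).differentiable (by norm_num)

theorem Lop_comp_apply (V : Euc d → ℝ) {f : ℝ → ℝ} (hf : Differentiable ℝ f) {i : Fin d}
    (hf' : DifferentiableAt ℝ (deriv f) (x i)) :
    Lop V (fun y => f (y i)) x = deriv (deriv f) (x i) - pd i V x * deriv f (x i) := by
  have hpd : ∀ k, pd k (fun y => f (y i)) = fun y => if i = k then deriv f (y i) else 0 :=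
    fun k => funext fun y => pd_comp_apply (hf (y i)) k
  have hlap : ∀ k,
      pd k (pd k fun y => f (y i)) x = if i = k then deriv (deriv f) (x i) else 0 := by
    intro k
    by_cases hik : i = k
    · subst hik
      simpa [hpd] using pd_comp_apply hf' i
    · simpa [hpd, hik] using pd_const k 0
  simp only [Lop, hlap]
  simp [gradv, dotProduct, hpd]

theorem jac_comp_apply {h : Fin d → ℝ → ℝ} (hh : ∀ i, DifferentiableAt ℝ (h i) (x i)) :
    jac (fun y i => h i (y i)) x = diagonal fun i => deriv (h i) (x i) := by
  ext i j
  simp [jac, pd_comp_apply (hh i), diagonal_apply]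

end PartialDerivatives

section PerturbedProduct

variable {d : ℕ} {U : Fin d → ℝ → ℝ} {φ : Euc d → ℝ} {ε : Fin d → ℝ} {h : Fin d → ℝ → ℝ}

theorem vecL_perturbedProduct (hU : ∀ i, Differentiable ℝ (U i)) (hφ : Differentiable ℝ φ)
    (hh : ∀ i, Differentiable ℝ (h i)) (hh' : ∀ i y, deriv (h i) y = exp (ε i * U i y))
    (y : Euc d) (i : Fin d) :
    vecL (fun y => (∑ j, U j (y j)) + φ y) (fun y j => h j (y j)) y i
      = exp (ε i * U i (y i)) * ((ε i - 1) * deriv (U i) (y i) - pd i φ y) := by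
  have hdh : deriv (h i) = fun t => exp (ε i * U i t) := funext (hh' i)
  have hdh' :
      HasDerivAt (deriv (h i)) (exp (ε i * U i (y i)) * (ε i * deriv (U i) (y i))) (y i) :=
    hdh ▸ ((hU i (y i)).hasDerivAt.const_mul (ε i)).exp
  have hpdV : pd i (fun y => (∑ j, U j (y j)) + φ y) y = deriv (U i) (y i) + pd i φ y := by
    rw [pd_add (by fun_prop) (hφ y), pd_sum_comp_apply fun j => hU j (y j)]
  rw [vecL, Lop_comp_apply _ (hh i) hdh'.differentiableAt, hdh'.deriv, hpdV, hh']
  ring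

theorem transpose_jac_vecL_perturbedProduct (hU : ∀ i, ContDiff ℝ 2 (U i)) (hφ : ContDiff ℝ 2 φ)
    (hh : ∀ i, Differentiable ℝ (h i)) (hh' : ∀ i y, deriv (h i) y = exp (ε i * U i y))
    (x : Euc d) :
    (jac (vecL (fun y => (∑ j, U j (y j)) + φ y) (fun y j => h j (y j))) x)ᵀ
      = -((hessM φ x + diagonal fun i =>
          (1 - ε i) * (deriv (deriv (U i)) (x i) + ε i * deriv (U i) (x i) ^ 2)
          + ε i * pd i φ x * deriv (U i) (x i)) * diagonal fun i => exp (ε i * U i (x i))) := by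
  have hUd : ∀ j, Differentiable ℝ (U j) := fun j => (hU j).differentiable (by norm_num)
  have hU'd : ∀ j, Differentiable ℝ (deriv (U j)) := fun j => (hU j).differentiable_deriv_two
  have hpdφ : ∀ j, Differentiable ℝ (pd j φ) := hφ.differentiable_pd
  have hexp : ∀ j, HasDerivAt (fun t => exp (ε j * U j t))
      (exp (ε j * U j (x j)) * (ε j * deriv (U j) (x j))) (x j) :=
    fun j => ((hUd j (x j)).hasDerivAt.const_mul (ε j)).exp
  ext j i
  simp only [transpose_apply, jac, of_apply,
    vecL_perturbedProduct hUd (hφ.differentiable (by norm_num)) hh hh']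
  rw [pd_mul (by fun_prop) (by fun_prop), pd_sub (by fun_prop) (hpdφ i x),
    pd_const_mul (by fun_prop), pd_comp_apply (hU'd i _), pd_comp_apply (hexp i).differentiableAt,
    (hexp i).deriv]
  rcases eq_or_ne i j with rfl | hij
  · simp [Matrix.mul_diagonal, hessM]
    ring
  · simp [Matrix.mul_diagonal, hessM, hij, hij.symm]
    ring

end PerturbedProduct

theorem stmt_16_general {d : ℕ}
    (U : Fin d → ℝ → ℝ) (hU : ∀ i, ContDiff ℝ (⊤ : ℕ∞) (U i))
    (φ : Euc d → ℝ) (hφ : ContDiff ℝ (⊤ : ℕ∞) φ)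
    (ε : Fin d → ℝ)
    (h : Fin d → ℝ → ℝ) (hh : ∀ i, ContDiff ℝ (⊤ : ℕ∞) (h i))
    (hh' : ∀ i y, deriv (h i) y = Real.exp (ε i * U i y))
    (V : Euc d → ℝ) (hVdef : ∀ x, V x = (∑ i, U i (x i)) + φ x)
    (H : Euc d → Euc d) (hHdef : ∀ x i, H x i = h i (x i))
    (x : Euc d) :
    -(jac (vecL V H) x)ᵀ * ((jac H x)ᵀ)⁻¹
      = hessM φ x + Matrix.diagonal (fun i =>
          (1 - ε i) * (deriv (deriv (U i)) (x i) + ε i * deriv (U i) (x i) ^ 2)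
          + ε i * pd i φ x * deriv (U i) (x i)) := by
  obtain rfl : V = fun y => (∑ i, U i (y i)) + φ y := funext hVdef
  obtain rfl : H = fun y i => h i (y i) := funext₂ hHdef
  have h2 : (2 : WithTop ℕ∞) ≤ (⊤ : ℕ∞) := WithTop.coe_le_coe.mpr le_top
  have hhd : ∀ i, Differentiable ℝ (h i) := fun i => (hh i).differentiable (by simp)
  rw [transpose_jac_vecL_perturbedProduct (fun i => (hU i).of_le h2) (hφ.of_le h2) hhd hh',
    neg_neg, jac_comp_apply fun i => hhd i (x i), diagonal_transpose]
  simp only [hh']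
  exact mul_nonsing_inv_cancel_right _ _
    (by simp [det_diagonal, Finset.prod_ne_zero_iff, exp_ne_zero])

/-- matrix computation for perturbed product potentials. -/
theorem stmt_16 {d : ℕ} (hd : 1 ≤ d)
    (U : Fin d → ℝ → ℝ) (hU : ∀ i, ContDiff ℝ (⊤ : ℕ∞) (U i))
    (φ : Euc d → ℝ) (hφ : ContDiff ℝ (⊤ : ℕ∞) φ)
    (ε : Fin d → ℝ)
    (h : Fin d → ℝ → ℝ) (hh : ∀ i, ContDiff ℝ (⊤ : ℕ∞) (h i))
    (hh' : ∀ i y, deriv (h i) y = Real.exp (ε i * U i y))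
    (V : Euc d → ℝ) (hVdef : ∀ x, V x = (∑ i, U i (x i)) + φ x)
    (H : Euc d → Euc d) (hHdef : ∀ x i, H x i = h i (x i))
    (x : Euc d) :
    -(jac (vecL V H) x)ᵀ * ((jac H x)ᵀ)⁻¹
      = hessM φ x + Matrix.diagonal (fun i =>
          (1 - ε i) * (deriv (deriv (U i)) (x i) + ε i * deriv (U i) (x i) ^ 2)
          + ε i * pd i φ x * deriv (U i) (x i)) :=
  stmt_16_general U hU φ hφ ε h hh hh' V hVdef H hHdef x

end
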